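/- Let S(A) = {a_n} be an independent Stanley sequence with k > κ(A), suppose a_{2^k − 1} ≥ λ(A) + ω(A), and let d be an integer with ω(A) < d ≤ a_{2^k} − λ(A). Set c = a_{2^k} and A* = {a_0, ..., a_{2^k − 1}}, and define J = (A* ∪ (A* + c)) ∪ ((A* + 7c − d) ∪ (A* + 8c − d)) ∪ ((A* + 10c − d) ∪ (A* + 11c − d)) ∪ ((A* + 17c − 2d) ∪ (A* + 18c − 2d)) ∪ ((A* + 30c − 3d) ∪ (A* + 31c − 3d)) ∪ ((A* + 37c − 4d) ∪ (A* + 38c − 4d)) ∪ ((A* + 40c − 4d) ∪ (A* + 41c − 4d)) ∪ ((A* + 47c − 5d) ∪ (A* + 48c − 5d)). Then the set J is 3-free. -/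

import Mathlib

/-- A set of integers is 3-free if it contains no 3-term arithmetic progression. -/
def ThreeFreeSet (S : Set ℤ) : Prop :=
  ∀ x ∈ S, ∀ y ∈ S, ∀ z ∈ S, x < y → y < z → x + z ≠ 2 * y

/-- `a` is the Stanley sequence generated greedily from the finite 3-free set `A`
of nonnegative integers containing 0: `a` first enumerates `A` in increasing order,
and for `n ≥ |A|`, `a n` is the least integer exceeding `a (n-1)` keeping the
set of terms so far 3-free. -/
def IsStanleySeq (A : Finset ℤ) (a : ℕ → ℤ) : Prop :=
  (0 : ℤ) ∈ A ∧ (∀ x ∈ A, 0 ≤ x) ∧ ThreeFreeSet ↑A ∧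
  StrictMono a ∧ (∀ i < A.card, a i ∈ A) ∧
  ∀ n, A.card ≤ n →
    IsLeast {m : ℤ | a (n - 1) < m ∧ ThreeFreeSet (a '' Set.Iio n ∪ {m})} (a n)

/-- The two defining conditions of an independent Stanley sequence,
for a given λ and κ. -/
def IndepParams (a : ℕ → ℤ) (lam : ℤ) (κ : ℕ) : Prop :=
  ∀ k, κ ≤ k →
    (∀ i < 2 ^ k, a (2 ^ k + i) = a (2 ^ k) + a i) ∧
    a (2 ^ k) = 2 * a (2 ^ k - 1) + 1 - lam

/-- A Stanley sequence is independent if `IndepParams` holds for some λ and κ. -/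
def Independent (a : ℕ → ℤ) : Prop := ∃ lam κ, IndepParams a lam κ

/-- κ(A): the minimal κ witnessing independence. -/
noncomputable def kappa (a : ℕ → ℤ) : ℕ := sInf {κ | ∃ lam, IndepParams a lam κ}

/-- λ(A), recovered from the defining equation at k = κ(A). -/
noncomputable def lambdaA (a : ℕ → ℤ) : ℤ :=
  2 * a (2 ^ kappa a - 1) + 1 - a (2 ^ kappa a)

/-- The repeat factor ρ(A) = a_{2^{κ(A)}}. -/
noncomputable def rho (a : ℕ → ℤ) : ℤ := a (2 ^ kappa a)

/-- The scaling factor α(A), satisfying a_{2^k} = α·3^k for all k ≥ κ(A). -/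
noncomputable def scalingFactor (a : ℕ → ℤ) : ℚ :=
  (a (2 ^ kappa a) : ℚ) / 3 ^ kappa a

/-- An integer `x` is covered by a set `S` if there are `y < z < x` in `S`
with `y, z, x` in arithmetic progression. -/
def Covers (S : Set ℤ) (x : ℤ) : Prop :=
  ∃ y z, y ∈ S ∧ z ∈ S ∧ y < z ∧ z < x ∧ 2 * z = y + x

/-- An integer `x` is jointly covered by `S` and `T` if there are `y < z < x`
with `y ∈ S`, `z ∈ T`, and `y, z, x` in arithmetic progression. -/
def JointlyCovers (S T : Set ℤ) (x : ℤ) : Prop :=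
  ∃ y z, y ∈ S ∧ z ∈ T ∧ y < z ∧ z < x ∧ 2 * z = y + x

/-- O(A): nonnegative integers neither in the Stanley sequence nor covered by it. -/
def OSet (a : ℕ → ℤ) : Set ℤ :=
  {x | 0 ≤ x ∧ x ∉ Set.range a ∧ ¬ Covers (Set.range a) x}

/-- ω(A): the maximum element of O(A). -/
noncomputable def omegaA (a : ℕ → ℤ) : ℤ := sSup (OSet a)

/-- The translate `S + t` of a set of integers. -/
def shift (S : Set ℤ) (t : ℤ) : Set ℤ := (· + t) '' S

/-- A triadic number: a rational whose denominator in lowest terms is a power of 3. -/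
def IsTriadic (q : ℚ) : Prop := ∃ j : ℕ, q.den = 3 ^ j

/-!
Let `B = A*`, `M = a_{2^k - 1}` and `D = B ∪ (B + c)`; `D` consists of the first `2^{k+1}` terms
of the sequence, hence is 3-free, and `J` is the union of the eight translates
`D + (α c - β d)`, `(α, β) ∈ jBlocks`. Independence gives `c = 2M + 1 - λ` with `λ ≥ 0`, and
`0 ≤ d ≤ c - λ`.

A progression `x + z = 2y` in `J` lying in a single translate is a progression in `D`. Otherwise
write its terms as `u + e c + (α c - β d)` with `u ∈ B`, `e ∈ {0, 1}`: then
`u₁ + u₃ - 2u₂ = p c - q d`, where `|u₁ + u₃ - 2u₂| ≤ 2M < c + λ`. A finite check over the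
triples of blocks shows that either `|p c - q d| ≥ c + λ`, or `q = 0` and `p = ±1`; in the
latter case `u₁, u₂ + c, u₃ + c` (resp. `u₁, u₂, u₃ + c`) is a progression in `D`.
-/

open Set

theorem threeFreeSet_iff {S : Set ℤ} :
    ThreeFreeSet S ↔ ∀ x ∈ S, ∀ y ∈ S, ∀ z ∈ S, x + z = 2 * y → x = z := by
  refine ⟨fun h x hx y hy z hz hxz => ?_, fun h x hx y hy z hz hxy hyz hxz => ?_⟩
  · by_contra hne
    rcases lt_or_gt_of_ne hne with hlt | hlt
    · exact h x hx y hy z hz (by linarith) (by linarith) hxz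
    · exact h z hz y hy x hx (by linarith) (by linarith) (by linarith)
  · linarith [h x hx y hy z hz hxz]

theorem ThreeFreeSet.mono {S T : Set ℤ} (hT : ThreeFreeSet T) (hST : S ⊆ T) : ThreeFreeSet S :=
  fun x hx y hy z hz => hT x (hST hx) y (hST hy) z (hST hz)

theorem ThreeFreeSet.union_singleton {S : Set ℤ} {M m : ℤ} (hS : ThreeFreeSet S)
    (hSM : S ⊆ Icc 0 M) (hm : 2 * M < m) : ThreeFreeSet (S ∪ {m}) := by
  have hle : ∀ w ∈ S ∪ {m}, w ≤ m := by
    rintro w (hw | rfl)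
    · linarith [(hSM hw).1, (hSM hw).2]
    · exact le_rfl
  intro x hx y hy z hz hxy hyz
  have hyS : y ∈ S := hy.resolve_right fun h => by linarith [hle z hz, mem_singleton_iff.mp h]
  have hxS : x ∈ S := hx.resolve_right fun h => by linarith [hle z hz, mem_singleton_iff.mp h]
  rcases hz with hzS | rfl
  · exact hS x hxS y hyS z hzS hxy hyz
  · intro h
    linarith [(hSM hxS).1, (hSM hyS).2]

theorem exists_add_mul_of_mem_union_shift {B : Set ℤ} {c w : ℤ} (hw : w ∈ B ∪ shift B c) :
    ∃ u ∈ B, ∃ e : ℤ, (e = 0 ∨ e = 1) ∧ w = u + e * c := by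
  rcases hw with hw | ⟨u, hu, rfl⟩
  · exact ⟨w, hw, 0, Or.inl rfl, by ring⟩
  · exact ⟨u, hu, 1, Or.inr rfl, by ring⟩

theorem shift_union_shift (S : Set ℤ) (c t : ℤ) :
    shift (S ∪ shift S c) t = shift S t ∪ shift S (c + t) := by
  simp only [shift, image_union, image_image, add_assoc]

theorem shift_zero (S : Set ℤ) : shift S 0 = S := by
  simp [shift]

def IsLarge (p q : ℤ) : Prop := (q ≤ 0 ∧ 2 ≤ p) ∨ (0 < q ∧ q < p)

theorem IsLarge.add_le_mul_sub_mul {p q c lam d : ℤ} (h : IsLarge p q) (hlam : 0 ≤ lam)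
    (hd : 0 ≤ d) (hdc : d ≤ c - lam) : c + lam ≤ p * c - q * d := by
  rcases h with ⟨hq, hp⟩ | ⟨hq, hp⟩
  · nlinarith [mul_nonneg (sub_nonneg.mpr hp) (by linarith : (0 : ℤ) ≤ c),
      mul_nonneg (neg_nonneg.mpr hq) hd]
  · nlinarith [mul_nonneg (by linarith : (0 : ℤ) ≤ p - q - 1) (by linarith : (0 : ℤ) ≤ c),
      mul_nonneg hq.le (by linarith : (0 : ℤ) ≤ c - lam - d),
      mul_nonneg (by linarith : (0 : ℤ) ≤ q - 1) hlam]

/-- Guarantees `IsLarge (P + t) Q` for every `|t| ≤ 2`, except for `P + t = 1` when `Q = 0`. -/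
def IsBlockLarge (P Q : ℤ) : Prop := (Q < 0 ∧ 4 ≤ P) ∨ (Q = 0 ∧ 3 ≤ P) ∨ (0 < Q ∧ Q + 3 ≤ P)

instance : DecidableRel IsBlockLarge := fun P Q => by unfold IsBlockLarge; infer_instance

section Translates

variable {B : Set ℤ} {M c lam d : ℤ}

theorem add_sub_two_mul_ne_mul_of_threeFreeSet (hB : B ⊆ Icc 0 M) (hMc : M < c)
    (h3 : ThreeFreeSet (B ∪ shift B c)) {u₁ u₂ u₃ : ℤ} (h₁ : u₁ ∈ B) (h₂ : u₂ ∈ B) (h₃ : u₃ ∈ B)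
    {e : ℤ} (he : e = 1 ∨ e = -1) : u₁ + u₃ - 2 * u₂ ≠ e * c := by
  have hc₃ : u₃ + c ∈ B ∪ shift B c := Or.inr ⟨u₃, h₃, rfl⟩
  intro h
  have hu₁ : u₁ = u₃ + c := by
    rcases he with rfl | rfl
    · exact threeFreeSet_iff.mp h3 _ (Or.inl h₁) _ (Or.inr ⟨u₂, h₂, rfl⟩) _ hc₃ (by linarith)
    · exact threeFreeSet_iff.mp h3 _ (Or.inl h₁) _ (Or.inl h₂) _ hc₃ (by linarith)
  linarith [(hB h₁).2, (hB h₃).1]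

theorem add_sub_two_mul_ne_mul_sub_mul (hB : B ⊆ Icc 0 M) (hc : c = 2 * M + 1 - lam)
    (hlam : 0 ≤ lam) (hd : 0 ≤ d) (hdc : d ≤ c - lam) (h3 : ThreeFreeSet (B ∪ shift B c))
    {u₁ u₂ u₃ : ℤ} (h₁ : u₁ ∈ B) (h₂ : u₂ ∈ B) (h₃ : u₃ ∈ B) {p q : ℤ}
    (hpq : (q = 0 ∧ (p = 1 ∨ p = -1)) ∨ IsLarge p q ∨ IsLarge (-p) (-q)) :
    u₁ + u₃ - 2 * u₂ ≠ p * c - q * d := by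
  have hupper : u₁ + u₃ - 2 * u₂ ≤ 2 * M := by linarith [(hB h₁).2, (hB h₃).2, (hB h₂).1]
  have hlower : -(2 * M) ≤ u₁ + u₃ - 2 * u₂ := by linarith [(hB h₁).1, (hB h₃).1, (hB h₂).2]
  rcases hpq with ⟨rfl, hp⟩ | hp | hp
  · rw [zero_mul, sub_zero]
    exact add_sub_two_mul_ne_mul_of_threeFreeSet hB (by linarith) h3 h₁ h₂ h₃ hp
  · linarith [hp.add_le_mul_sub_mul hlam hd hdc]
  · linarith [hp.add_le_mul_sub_mul hlam hd hdc]

theorem threeFreeSet_biUnion_shift (hB : B ⊆ Icc 0 M) (hc : c = 2 * M + 1 - lam)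
    (hlam : 0 ≤ lam) (hd : 0 ≤ d) (hdc : d ≤ c - lam) (h3 : ThreeFreeSet (B ∪ shift B c))
    {T : Finset (ℤ × ℤ)} (hT : ∀ v₁ ∈ T, ∀ v₂ ∈ T, ∀ v₃ ∈ T, (v₁ = v₂ ∧ v₂ = v₃) ∨
      IsBlockLarge (2 * v₂.1 - v₁.1 - v₃.1) (2 * v₂.2 - v₁.2 - v₃.2) ∨
      IsBlockLarge (v₁.1 + v₃.1 - 2 * v₂.1) (v₁.2 + v₃.2 - 2 * v₂.2)) :
    ThreeFreeSet (⋃ v ∈ T, shift (B ∪ shift B c) (v.1 * c - v.2 * d)) := by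
  rw [threeFreeSet_iff]
  intro x hx y hy z hz hxz
  simp only [mem_iUnion] at hx hy hz
  obtain ⟨v₁, hv₁, w₁, hw₁, rfl⟩ := hx
  obtain ⟨v₂, hv₂, w₂, hw₂, rfl⟩ := hy
  obtain ⟨v₃, hv₃, w₃, hw₃, rfl⟩ := hz
  rcases hT v₁ hv₁ v₂ hv₂ v₃ hv₃ with ⟨rfl, rfl⟩ | hfar
  · simpa using threeFreeSet_iff.mp h3 w₁ hw₁ w₂ hw₂ w₃ hw₃ (by linarith)
  exfalso
  obtain ⟨u₁, h₁, e₁, he₁, rfl⟩ := exists_add_mul_of_mem_union_shift hw₁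
  obtain ⟨u₂, h₂, e₂, he₂, rfl⟩ := exists_add_mul_of_mem_union_shift hw₂
  obtain ⟨u₃, h₃, e₃, he₃, rfl⟩ := exists_add_mul_of_mem_union_shift hw₃
  refine add_sub_two_mul_ne_mul_sub_mul hB hc hlam hd hdc h3 h₁ h₂ h₃
    (p := 2 * (v₂.1 + e₂) - (v₁.1 + e₁) - (v₃.1 + e₃)) (q := 2 * v₂.2 - v₁.2 - v₃.2)
    ?_ (by linear_combination hxz)
  unfold IsBlockLarge at hfar
  unfold IsLarge
  omega

end Translates

def jBlocks : Finset (ℤ × ℤ) :=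
  {(0, 0), (7, 1), (10, 1), (17, 2), (30, 3), (37, 4), (40, 4), (47, 5)}

theorem jBlocks_spec : ∀ v₁ ∈ jBlocks, ∀ v₂ ∈ jBlocks, ∀ v₃ ∈ jBlocks, (v₁ = v₂ ∧ v₂ = v₃) ∨
    IsBlockLarge (2 * v₂.1 - v₁.1 - v₃.1) (2 * v₂.2 - v₁.2 - v₃.2) ∨
    IsBlockLarge (v₁.1 + v₃.1 - 2 * v₂.1) (v₁.2 + v₃.2 - 2 * v₂.2) := by
  decide

theorem union_shift_eq_biUnion_jBlocks (S : Set ℤ) (c d : ℤ) :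
    (S ∪ shift S c) ∪
        (shift S (7 * c - d) ∪ shift S (8 * c - d)) ∪
        (shift S (10 * c - d) ∪ shift S (11 * c - d)) ∪
        (shift S (17 * c - 2 * d) ∪ shift S (18 * c - 2 * d)) ∪
        (shift S (30 * c - 3 * d) ∪ shift S (31 * c - 3 * d)) ∪
        (shift S (37 * c - 4 * d) ∪ shift S (38 * c - 4 * d)) ∪
        (shift S (40 * c - 4 * d) ∪ shift S (41 * c - 4 * d)) ∪
        (shift S (47 * c - 5 * d) ∪ shift S (48 * c - 5 * d)) =
    ⋃ v ∈ jBlocks, shift (S ∪ shift S c) (v.1 * c - v.2 * d) := by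
  simp only [jBlocks, Finset.set_biUnion_insert, Finset.set_biUnion_singleton, shift_union_shift]
  simp only [union_assoc]
  ring_nf
  simp only [shift_zero]

theorem Independent.indepParams_lambdaA {a : ℕ → ℤ} (h : Independent a) :
    IndepParams a (lambdaA a) (kappa a) := by
  obtain ⟨lam, κ, hκ⟩ := h
  obtain ⟨lam', hlam'⟩ : ∃ lam', IndepParams a lam' (kappa a) :=
    Nat.sInf_mem (s := {κ | ∃ lam, IndepParams a lam κ}) ⟨κ, lam, hκ⟩
  have hlam : lambdaA a = lam' := by
    have := (hlam' _ le_rfl).2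
    unfold lambdaA
    linarith
  rwa [hlam]

namespace IsStanleySeq

variable {A : Finset ℤ} {a : ℕ → ℤ}

theorem nonneg (hA : IsStanleySeq A a) (n : ℕ) : 0 ≤ a n :=
  (hA.2.1 _ (hA.2.2.2.2.1 0 (Finset.card_pos.mpr ⟨0, hA.1⟩))).trans
    (hA.2.2.2.1.monotone n.zero_le)

theorem image_Iio_subset_Icc (hA : IsStanleySeq A a) (n : ℕ) :
    a '' Iio n ⊆ Icc 0 (a (n - 1)) := by
  rintro _ ⟨i, hi, rfl⟩
  exact ⟨hA.nonneg i, hA.2.2.2.1.monotone (by rw [mem_Iio] at hi; omega)⟩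

theorem threeFreeSet_image_Iio (hA : IsStanleySeq A a) (n : ℕ) : ThreeFreeSet (a '' Iio n) := by
  obtain ⟨-, -, h3A, -, hmemA, hgreedy⟩ := hA
  rcases le_or_gt n A.card with hn | hn
  · refine h3A.mono ?_
    rintro _ ⟨i, hi, rfl⟩
    exact hmemA i (lt_of_lt_of_le hi hn)
  · obtain ⟨m, rfl⟩ : ∃ m, n = m + 1 := ⟨n - 1, by omega⟩
    refine (hgreedy m (by omega)).1.2.mono ?_
    rintro _ ⟨i, hi, rfl⟩
    rcases Nat.lt_succ_iff_lt_or_eq.mp hi with hi | rfl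
    · exact Or.inl ⟨i, hi, rfl⟩
    · exact Or.inr rfl

/-- `2 a (n - 1) + 1` is always an admissible candidate for the greedy choice. -/
theorem le_two_mul_add_one (hA : IsStanleySeq A a) {n : ℕ} (hn : A.card ≤ n) :
    a n ≤ 2 * a (n - 1) + 1 :=
  (hA.2.2.2.2.2 n hn).2 ⟨by linarith [hA.nonneg (n - 1)],
    (hA.threeFreeSet_image_Iio n).union_singleton (hA.image_Iio_subset_Icc n) (by omega)⟩

theorem lambdaA_nonneg (hA : IsStanleySeq A a) (hInd : Independent a) : 0 ≤ lambdaA a := by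
  have hcard : A.card ≤ 2 ^ (kappa a + A.card) :=
    A.card.lt_two_pow_self.le.trans (Nat.pow_le_pow_right two_pos (Nat.le_add_left _ _))
  linarith [(hInd.indepParams_lambdaA (kappa a + A.card) (Nat.le_add_right _ _)).2,
    hA.le_two_mul_add_one hcard]

theorem threeFreeSet_image_Iio_union_shift (hA : IsStanleySeq A a) (hInd : Independent a)
    {k : ℕ} (hk : kappa a ≤ k) :
    ThreeFreeSet (a '' Iio (2 ^ k) ∪ shift (a '' Iio (2 ^ k)) (a (2 ^ k))) := by
  have hpow : 2 ^ (k + 1) = 2 ^ k + 2 ^ k := by rw [pow_succ, mul_two]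
  refine (hA.threeFreeSet_image_Iio (2 ^ (k + 1))).mono (union_subset ?_ ?_)
  · exact image_mono (Iio_subset_Iio (Nat.pow_le_pow_right two_pos k.le_succ))
  · rintro _ ⟨_, ⟨i, hi, rfl⟩, rfl⟩
    rw [mem_Iio] at hi
    refine ⟨2 ^ k + i, by rw [mem_Iio]; omega, ?_⟩
    rw [(hInd.indepParams_lambdaA k hk).1 i hi, add_comm]

end IsStanleySeq

theorem omegaA_nonneg (a : ℕ → ℤ) : 0 ≤ omegaA a := by
  rcases (OSet a).eq_empty_or_nonempty with he | hne
  · rw [omegaA, he, Int.csSup_empty]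
  · by_cases hbdd : BddAbove (OSet a)
    · exact (Int.csSup_mem hne hbdd).1
    · rw [omegaA, Int.csSup_of_not_bddAbove hbdd]

theorem construction_J_is_three_free_general (A : Finset ℤ) (a : ℕ → ℤ)
    (hA : IsStanleySeq A a) (hInd : Independent a) (k : ℕ) (hk : kappa a < k)
    (d : ℤ) (hd1 : omegaA a < d) (hd2 : d ≤ a (2 ^ k) - lambdaA a)
    (c : ℤ) (hc : c = a (2 ^ k))
    (Ast : Set ℤ) (hAst : Ast = a '' Set.Iio (2 ^ k))
    (J : Set ℤ)
    (hJ : J = (Ast ∪ shift Ast c) ∪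
        (shift Ast (7 * c - d) ∪ shift Ast (8 * c - d)) ∪
        (shift Ast (10 * c - d) ∪ shift Ast (11 * c - d)) ∪
        (shift Ast (17 * c - 2 * d) ∪ shift Ast (18 * c - 2 * d)) ∪
        (shift Ast (30 * c - 3 * d) ∪ shift Ast (31 * c - 3 * d)) ∪
        (shift Ast (37 * c - 4 * d) ∪ shift Ast (38 * c - 4 * d)) ∪
        (shift Ast (40 * c - 4 * d) ∪ shift Ast (41 * c - 4 * d)) ∪
        (shift Ast (47 * c - 5 * d) ∪ shift Ast (48 * c - 5 * d))) :
    ThreeFreeSet J := by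
  rw [hJ, union_shift_eq_biUnion_jBlocks]
  subst hc hAst
  exact threeFreeSet_biUnion_shift (hA.image_Iio_subset_Icc _)
    (hInd.indepParams_lambdaA k hk.le).2 (hA.lambdaA_nonneg hInd)
    (by linarith [omegaA_nonneg a]) hd2 (hA.threeFreeSet_image_Iio_union_shift hInd hk.le)
    jBlocks_spec

/-- the set J built from sixteen translates of A* is 3-free. -/
theorem construction_J_is_three_free (A : Finset ℤ) (a : ℕ → ℤ)
    (hA : IsStanleySeq A a) (hInd : Independent a) (k : ℕ) (hk : kappa a < k)
    (hbound : lambdaA a + omegaA a ≤ a (2 ^ k - 1))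
    (d : ℤ) (hd1 : omegaA a < d) (hd2 : d ≤ a (2 ^ k) - lambdaA a)
    (c : ℤ) (hc : c = a (2 ^ k))
    (Ast : Set ℤ) (hAst : Ast = a '' Set.Iio (2 ^ k))
    (J : Set ℤ)
    (hJ : J = (Ast ∪ shift Ast c) ∪
        (shift Ast (7 * c - d) ∪ shift Ast (8 * c - d)) ∪
        (shift Ast (10 * c - d) ∪ shift Ast (11 * c - d)) ∪
        (shift Ast (17 * c - 2 * d) ∪ shift Ast (18 * c - 2 * d)) ∪
        (shift Ast (30 * c - 3 * d) ∪ shift Ast (31 * c - 3 * d)) ∪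
        (shift Ast (37 * c - 4 * d) ∪ shift Ast (38 * c - 4 * d)) ∪
        (shift Ast (40 * c - 4 * d) ∪ shift Ast (41 * c - 4 * d)) ∪
        (shift Ast (47 * c - 5 * d) ∪ shift Ast (48 * c - 5 * d))) :
    ThreeFreeSet J :=
  construction_J_is_three_free_general A a hA hInd k hk d hd1 hd2 c hc Ast hAst J hJ
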